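/- For any two distinct non-vertex points p and q of the weighted projective plane P(1,1,2) (distinct meaning their representatives (x₀,y₀,z₀) and (x₁,y₁,z₁) are not related by (x₁,y₁,z₁) = (λx₀,λy₀,λ²z₀) for any λ ∈ ℂ*), the set of forms f ∈ W singular at both p and q is a complex linear subspace of W of dimension 10 (codimension 6). -/

import Mathlib

open MvPolynomial

noncomputable section

/-- The polynomial ring `ℂ[x, y, z]`, with variables indexed by `Fin 3`:
`x = X 0`, `y = X 1`, `z = X 2`. -/
abbrev P3 : Type := MvPolynomial (Fin 3) ℂ

/-- The weights `wt(x) = wt(y) = 1`, `wt(z) = 2`. -/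
def w112 : Fin 3 → ℕ := ![1, 1, 2]

/-- The space `W` of weighted homogeneous polynomials of weighted degree `6`. -/
def W6 : Submodule ℂ P3 := weightedHomogeneousSubmodule ℂ w112 6

/-- A form `f` is singular at the point of the cone `P(1,1,2)` with representative `p ∈ ℂ³`
if the three partial derivatives of `f` all vanish at `p`. -/
def SingAt (f : P3) (p : Fin 3 → ℂ) : Prop :=
  ∀ i : Fin 3, eval p (pderiv i f) = 0

/-!
`W` has the monomial basis `xⁱ yʲ zᵏ`, `i + j + 2k = 6`, so it has dimension 16, and singularity
at `p` and at `q` is the kernel of the linear map `f ↦ (∇f(p), ∇f(q))` to `ℂ⁶`; it suffices to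
show that this map is onto. For that, given `r ≠ s`, take a form `g` vanishing at `r` but not at
`s`: a linear form `ψ` if `r` and `s` lie on different rulings of the cone, and otherwise a form
`Q` of weight 2 cutting the ruling only at `r`. Every `g ^ m * h` with `m ≥ 2` is singular at `r`,
and three choices of `h` give gradients at `s` with nonzero determinant.
-/

section Gradient

variable {σ R : Type*} [CommRing R]

def gradAt (r : σ → R) : MvPolynomial σ R →ₗ[R] σ → R :=
  LinearMap.pi fun i => (aeval r).toLinearMap ∘ₗ (pderiv i).toLinearMap

@[simp]
lemma gradAt_apply (r : σ → R) (f : MvPolynomial σ R) (i : σ) :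
    gradAt r f i = eval r (pderiv i f) := by
  simp [gradAt]

lemma gradAt_pow_mul_eq_zero {r : σ → R} {g : MvPolynomial σ R} (hg : eval r g = 0) {m : ℕ}
    (hm : 2 ≤ m) (h : MvPolynomial σ R) : gradAt r (g ^ m * h) = 0 := by
  ext i
  simp [hg, zero_pow (by omega : m - 1 ≠ 0), zero_pow (by omega : m ≠ 0)]

end Gradient

lemma singAt_iff_gradAt_eq_zero (f : P3) (r : Fin 3 → ℂ) : SingAt f r ↔ gradAt r f = 0 := by
  simp [SingAt, funext_iff]

section LinearAlgebra

variable {K V V₂ : Type*} [Field K] [AddCommGroup V] [Module K V] [AddCommGroup V₂]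
  [Module K V₂]

lemma Submodule.map_eq_top_of_det_ne_zero {ι : Type*} [Fintype ι] [DecidableEq ι]
    (f : V →ₗ[K] ι → K) {N : Submodule K V} (b : ι → V) (hb : ∀ k, b k ∈ N)
    (hdet : (Matrix.of fun k => f (b k)).det ≠ 0) : N.map f = ⊤ := by
  rw [eq_top_iff, ← (Matrix.linearIndependent_rows_of_det_ne_zero hdet)
    |>.span_eq_top_of_card_eq_finrank' (Module.finrank_fintype_fun_eq_card K).symm,
    Submodule.span_le]
  rintro _ ⟨k, rfl⟩
  exact ⟨b k, hb k, rfl⟩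

lemma Submodule.map_prod_eq_top {N : Submodule K V} {f g : V →ₗ[K] V₂}
    (hf : (N ⊓ LinearMap.ker g).map f = ⊤) (hg : (N ⊓ LinearMap.ker f).map g = ⊤) :
    N.map (f.prod g) = ⊤ := by
  refine eq_top_iff.2 fun ⟨u, v⟩ _ => ?_
  obtain ⟨x, ⟨hxN, hxg⟩, hxu⟩ := hf ▸ Submodule.mem_top (x := u)
  obtain ⟨y, ⟨hyN, hyf⟩, hyv⟩ := hg ▸ Submodule.mem_top (x := v)
  refine ⟨x + y, N.add_mem hxN hyN, ?_⟩
  simp_all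

lemma Submodule.finrank_inf_ker_add_finrank_map (N : Submodule K V) [FiniteDimensional K N]
    (f : V →ₗ[K] V₂) :
    Module.finrank K ↥(N ⊓ LinearMap.ker f) + Module.finrank K (N.map f) =
      Module.finrank K N := by
  rw [← LinearMap.range_domRestrict, ← (f.domRestrict N).finrank_range_add_finrank_ker, add_comm,
    LinearMap.ker_domRestrict, ← Submodule.finrank_map_subtype_eq, Submodule.map_comap_subtype]

end LinearAlgebra

lemma weight_w112 (d : Fin 3 →₀ ℕ) : Finsupp.weight w112 d = d 0 + d 1 + 2 * d 2 := by
  rw [Finsupp.weight_apply, Finsupp.sum_fintype _ _ (by simp)]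
  simp [Fin.sum_univ_three, w112, mul_comm]

def monomialsW6 : Finset (Fin 3 →₀ ℕ) :=
  ((Fintype.piFinset fun _ : Fin 3 => Finset.range 7).filter
    fun d => d 0 + d 1 + 2 * d 2 = 6).map Finsupp.equivFunOnFinite.symm.toEmbedding

lemma card_monomialsW6 : monomialsW6.card = 16 := by
  rw [monomialsW6, Finset.card_map]
  decide

lemma coe_monomialsW6 :
    (monomialsW6 : Set (Fin 3 →₀ ℕ)) = {d | Finsupp.weight w112 d = 6} := by
  ext d
  simp only [monomialsW6, Finset.coe_map, Finset.coe_filter, Set.mem_image_equiv, Equiv.symm_symm,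
    Equiv.coe_toEmbedding, Finsupp.equivFunOnFinite_apply, Fintype.mem_piFinset, Finset.mem_range,
    Fin.forall_fin_succ, Fin.succ_zero_eq_one, Fin.succ_one_eq_two, IsEmpty.forall_iff, and_true,
    Set.mem_ofPred_eq, weight_w112]
  omega

lemma finrank_W6 : Module.finrank ℂ W6 = 16 := by
  rw [W6, weightedHomogeneousSubmodule_eq_finsupp_supported, ← coe_monomialsW6,
    (AddMonoidAlgebra.supportedEquivFinsupp _).finrank_eq]
  simp [card_monomialsW6]

instance : FiniteDimensional ℂ W6 :=
  Module.finite_of_finrank_pos (by rw [finrank_W6]; norm_num)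

def linearForm (a b : ℂ) : P3 := C a * X 0 + C b * X 1

@[simp]
lemma eval_linearForm (a b : ℂ) (r : Fin 3 → ℂ) :
    eval r (linearForm a b) = a * r 0 + b * r 1 := by
  simp [linearForm]

lemma isWeightedHomogeneous_linearForm (a b : ℂ) :
    (linearForm a b).IsWeightedHomogeneous w112 1 :=
  ((isWeightedHomogeneous_X ℂ w112 0).C_mul a).add ((isWeightedHomogeneous_X ℂ w112 1).C_mul b)

lemma pow_mul_mem_W6_inf_ker {r : Fin 3 → ℂ} {g h : P3} {d e m : ℕ}
    (hg : g.IsWeightedHomogeneous w112 d) (hh : h.IsWeightedHomogeneous w112 e)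
    (hgr : eval r g = 0) (hm : 2 ≤ m) (hdeg : m * d + e = 6) :
    g ^ m * h ∈ W6 ⊓ LinearMap.ker (gradAt r) :=
  ⟨by rw [SetLike.mem_coe, W6, mem_weightedHomogeneousSubmodule, ← hdeg]; exact (hg.pow m).mul hh,
    gradAt_pow_mul_eq_zero hgr hm h⟩

lemma map_gradAt_W6_inf_ker_eq_top_of_ne_ruling {r s : Fin 3 → ℂ} {a b : ℂ}
    (hab : a * r 0 + b * r 1 ≠ 0) (hrs : r 1 * s 0 - r 0 * s 1 ≠ 0) :
    (W6 ⊓ LinearMap.ker (gradAt r)).map (gradAt s) = ⊤ := by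
  set φ := linearForm a b
  set ψ := linearForm (r 1) (-r 0)
  have hψr : eval r ψ = 0 := by simp only [ψ, eval_linearForm]; ring
  have hψ := isWeightedHomogeneous_linearForm (r 1) (-r 0)
  refine Submodule.map_eq_top_of_det_ne_zero _ ![ψ ^ 6 * 1, ψ ^ 5 * φ, ψ ^ 4 * X 2] ?_ ?_
  · intro k
    fin_cases k
    · exact pow_mul_mem_W6_inf_ker hψ (isWeightedHomogeneous_one ℂ w112) hψr (by norm_num) rfl
    · exact pow_mul_mem_W6_inf_ker hψ (isWeightedHomogeneous_linearForm a b) hψr (by norm_num) rfl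
    · exact pow_mul_mem_W6_inf_ker hψ (isWeightedHomogeneous_X ℂ w112 2) hψr (by norm_num) rfl
  · have hdet : (Matrix.of fun k => gradAt s (![ψ ^ 6 * 1, ψ ^ 5 * φ, ψ ^ 4 * X 2] k)).det =
        6 * (a * r 0 + b * r 1) * (r 1 * s 0 - r 0 * s 1) ^ 14 := by
      rw [Matrix.det_fin_three]
      simp [φ, ψ, linearForm]
      ring
    rw [hdet]
    exact mul_ne_zero (mul_ne_zero (by norm_num) hab) (pow_ne_zero _ hrs)

lemma map_gradAt_W6_inf_ker_eq_top_of_same_ruling {r s : Fin 3 → ℂ} {a b l : ℂ}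
    (hab : a * r 0 + b * r 1 ≠ 0) (hl : l ≠ 0) (hs0 : s 0 = l * r 0) (hs1 : s 1 = l * r 1)
    (hs2 : s 2 ≠ l ^ 2 * r 2) :
    (W6 ⊓ LinearMap.ker (gradAt r)).map (gradAt s) = ⊤ := by
  set φ := linearForm a b
  set ψ := linearForm (r 1) (-r 0)
  -- on the ruling `t ↦ (t r₀, t r₁, z)` through `r`, `Q = φ(r)² (z - r₂ t²)`
  set Q : P3 := C ((a * r 0 + b * r 1) ^ 2) * X 2 - C (r 2) * φ ^ 2
  have hQr : eval r Q = 0 := by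
    simp only [Q, φ, eval_sub, eval_mul, eval_C, eval_X, eval_pow, eval_linearForm]; ring
  have hφ := isWeightedHomogeneous_linearForm a b
  have hQ : Q.IsWeightedHomogeneous w112 2 :=
    ((isWeightedHomogeneous_X ℂ w112 2).C_mul _).sub ((hφ.pow 2).C_mul _)
  refine Submodule.map_eq_top_of_det_ne_zero _ ![Q ^ 3 * 1, Q ^ 2 * φ ^ 2, Q ^ 2 * (φ * ψ)] ?_ ?_
  · intro k
    fin_cases k
    · exact pow_mul_mem_W6_inf_ker hQ (isWeightedHomogeneous_one ℂ w112) hQr (by norm_num) rfl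
    · exact pow_mul_mem_W6_inf_ker hQ (hφ.pow 2) hQr le_rfl rfl
    · exact pow_mul_mem_W6_inf_ker hQ (hφ.mul (isWeightedHomogeneous_linearForm (r 1) (-r 0)))
        hQr le_rfl rfl
  · have hdet : (Matrix.of fun k =>
          gradAt s (![Q ^ 3 * 1, Q ^ 2 * φ ^ 2, Q ^ 2 * (φ * ψ)] k)).det =
        -6 * l ^ 2 * (a * r 0 + b * r 1) ^ 17 * (s 2 - l ^ 2 * r 2) ^ 6 := by
      rw [Matrix.det_fin_three]
      simp [φ, ψ, Q, linearForm, hs0, hs1]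
      ring
    rw [hdet]
    exact mul_ne_zero (mul_ne_zero (mul_ne_zero (by norm_num) (pow_ne_zero _ hl))
      (pow_ne_zero _ hab)) (pow_ne_zero _ (sub_ne_zero.2 hs2))

def SameConePoint (r s : Fin 3 → ℂ) : Prop :=
  ∃ l : ℂ, l ≠ 0 ∧ s 0 = l * r 0 ∧ s 1 = l * r 1 ∧ s 2 = l ^ 2 * r 2

lemma SameConePoint.symm {r s : Fin 3 → ℂ} : SameConePoint r s → SameConePoint s r := by
  rintro ⟨l, hl, h0, h1, h2⟩
  exact ⟨l⁻¹, inv_ne_zero hl,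
    by rw [h0, inv_mul_cancel_left₀ hl],
    by rw [h1, inv_mul_cancel_left₀ hl],
    by rw [h2, inv_pow, inv_mul_cancel_left₀ (pow_ne_zero 2 hl)]⟩

lemma map_gradAt_W6_inf_ker_eq_top {r s : Fin 3 → ℂ} (hr : ¬(r 0 = 0 ∧ r 1 = 0))
    (hs : ¬(s 0 = 0 ∧ s 1 = 0)) (hrs : ¬SameConePoint r s) :
    (W6 ⊓ LinearMap.ker (gradAt r)).map (gradAt s) = ⊤ := by
  obtain ⟨a, b, hab⟩ : ∃ a b : ℂ, a * r 0 + b * r 1 ≠ 0 := by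
    by_cases h0 : r 0 = 0
    · exact ⟨0, 1, by simpa [h0] using hr⟩
    · exact ⟨1, 0, by simpa using h0⟩
  by_cases hruling : r 1 * s 0 - r 0 * s 1 = 0
  · set l := (a * s 0 + b * s 1) / (a * r 0 + b * r 1)
    have hs0 : s 0 = l * r 0 := by
      rw [div_mul_eq_mul_div, eq_div_iff hab]; linear_combination b * hruling
    have hs1 : s 1 = l * r 1 := by
      rw [div_mul_eq_mul_div, eq_div_iff hab]; linear_combination -a * hruling
    have hl : l ≠ 0 := fun hl => hs ⟨by simp [hs0, hl], by simp [hs1, hl]⟩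
    exact map_gradAt_W6_inf_ker_eq_top_of_same_ruling hab hl hs0 hs1
      fun hs2 => hrs ⟨l, hl, hs0, hs1, hs2⟩
  · exact map_gradAt_W6_inf_ker_eq_top_of_ne_ruling hab hruling

/-- For any two distinct non-vertex points of `P(1,1,2)` (representatives `p`, `q` with nonzero
`(x,y)`-parts, not related by `q = (λp₀, λp₁, λ²p₂)` for any `λ ∈ ℂ*`), the set of forms
`f ∈ W` singular at both points is a complex linear subspace of `W` of dimension `10`
(codimension 6). -/
theorem cone_singular_at_two_points_codim_six
    (p q : Fin 3 → ℂ) (hp : ¬(p 0 = 0 ∧ p 1 = 0)) (hq : ¬(q 0 = 0 ∧ q 1 = 0))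
    (hpq : ¬ ∃ l : ℂ, l ≠ 0 ∧ q 0 = l * p 0 ∧ q 1 = l * p 1 ∧ q 2 = l ^ 2 * p 2) :
    ∃ S : Submodule ℂ P3,
      (S : Set P3) = {f : P3 | f ∈ W6 ∧ SingAt f p ∧ SingAt f q} ∧
      Module.finrank ℂ S = 10 := by
  set L := (gradAt p).prod (gradAt q)
  have hL : W6.map L = ⊤ := Submodule.map_prod_eq_top
    (map_gradAt_W6_inf_ker_eq_top hq hp (mt SameConePoint.symm hpq))
    (map_gradAt_W6_inf_ker_eq_top hp hq hpq)
  refine ⟨W6 ⊓ LinearMap.ker L, ?_, ?_⟩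
  · ext f
    simp [L, LinearMap.ker_prod, singAt_iff_gradAt_eq_zero]
  · have hrank := W6.finrank_inf_ker_add_finrank_map L
    rw [hL, finrank_top, finrank_W6, Module.finrank_prod, Module.finrank_fin_fun] at hrank
    omega

end
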